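/- arXiv:1210.7844 — 2 statements merged into one kernel-verified Lean document; each statement's English description precedes it below -/
import Mathlib

section
/- Let c ≥ 2 be an integer, let A ∈ ℂ^{n×n} be a Hermitian matrix that is colorable with c colors, and let B ∈ ℂ^{n×n} be an arbitrary real diagonal matrix. Then λ_max(A) ≤ (c−1)·(λ_max(A) − λ_max(B + A) + λ_max(B − A)); in particular, if λ_max(A) − λ_max(B + A) + λ_max(B − A) > 0, then c ≥ 1 + λ_max(A)/(λ_max(A) − λ_max(B + A) + λ_max(B − A)). -/
/-!
Colour the indices by a finite abelian group `G` of order `c` and twist a vector `x` by each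
character `ψ` of `G`, `x ↦ (ψ ∘ f) * x`. The twists leave `‖x‖` and the quadratic form of the
diagonal `B` unchanged, while character orthogonality, together with the vanishing of `A` inside
colour classes, makes the twisted quadratic forms of `A` sum to zero. Bounding the `c - 1`
nontrivial twists from below through `λ_max (B - A)` gives
`xᴴAx ≤ (c - 1) (λ_max (B - A) - xᴴBx)` for unit `x`; for a top eigenvector `x` of `B + A`
this combines with `xᴴAx ≤ λ_max A` to the claim.
-/

open Matrix
open scoped MatrixOrder

namespace Matrix.IsHermitian
variable {ι 𝕜 : Type*} [Fintype ι] [DecidableEq ι] [RCLike 𝕜] {M : Matrix ι ι 𝕜}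

theorem re_dotProduct_mulVec_le (hM : M.IsHermitian) {r : ℝ}
    (hr : ∀ i, hM.eigenvalues i ≤ r) (v : ι → 𝕜) :
    RCLike.re (star v ⬝ᵥ M *ᵥ v) ≤ r * RCLike.re (star v ⬝ᵥ v) := by
  have hle : M ≤ algebraMap ℝ (Matrix ι ι 𝕜) r :=
    le_algebraMap_of_spectrum_le (fun x hx => by
      obtain ⟨i, rfl⟩ := hM.spectrum_real_eq_range_eigenvalues ▸ hx
      exact hr i) hM.isSelfAdjoint
  simpa [sub_mulVec, Algebra.algebraMap_eq_smul_one, smul_mulVec, dotProduct_smul,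
    RCLike.smul_re] using (Matrix.le_iff.mp hle).re_dotProduct_nonneg v

theorem star_eigenvectorBasis_dotProduct_self (hM : M.IsHermitian) (j : ι) :
    star ⇑(hM.eigenvectorBasis j) ⬝ᵥ ⇑(hM.eigenvectorBasis j) = 1 := by
  rw [dotProduct_comm, ← EuclideanSpace.inner_eq_star_dotProduct, inner_self_eq_norm_sq_to_K,
    hM.eigenvectorBasis.orthonormal.1 j]
  simp

theorem star_eigenvectorBasis_dotProduct_mulVec (hM : M.IsHermitian) (j : ι) :
    star ⇑(hM.eigenvectorBasis j) ⬝ᵥ M *ᵥ ⇑(hM.eigenvectorBasis j) = hM.eigenvalues j := by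
  rw [hM.mulVec_eigenvectorBasis, dotProduct_smul, hM.star_eigenvectorBasis_dotProduct_self,
    RCLike.real_smul_eq_coe_mul, mul_one]

end Matrix.IsHermitian

section PhaseTwist
variable {ι : Type*} [Fintype ι]

theorem star_mul_dotProduct_mulVec_mul_eq_sum (M : Matrix ι ι ℂ) (u x : ι → ℂ) :
    star (u * x) ⬝ᵥ M *ᵥ (u * x) = ∑ k, ∑ l, star (u k) * u l * (star (x k) * M k l * x l) := by
  simp only [dotProduct, mulVec, Finset.mul_sum, Pi.star_apply, Pi.mul_apply]
  refine Finset.sum_congr rfl fun k _ => Finset.sum_congr rfl fun l _ => ?_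
  rw [star_mul']
  ring

theorem star_mul_dotProduct_mul_of_unit {u : ι → ℂ} (hu : ∀ k, star (u k) * u k = 1)
    (x : ι → ℂ) : star (u * x) ⬝ᵥ (u * x) = star x ⬝ᵥ x := by
  refine Finset.sum_congr rfl fun k _ => ?_
  simp only [Pi.star_apply, Pi.mul_apply, star_mul']
  linear_combination (star (x k) * x k) * hu k

theorem star_mul_dotProduct_diagonal_mulVec_mul_of_unit [DecidableEq ι] (d : ι → ℂ)
    {u : ι → ℂ} (hu : ∀ k, star (u k) * u k = 1) (x : ι → ℂ) :
    star (u * x) ⬝ᵥ diagonal d *ᵥ (u * x) = star x ⬝ᵥ diagonal d *ᵥ x := by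
  refine Finset.sum_congr rfl fun k _ => ?_
  simp only [mulVec_diagonal, Pi.star_apply, Pi.mul_apply, star_mul']
  linear_combination (star (x k) * d k * x k) * hu k

theorem sum_addChar_star_mul_dotProduct_mulVec_mul_eq_zero {G : Type*} [AddCommGroup G] [Fintype G]
    {A : Matrix ι ι ℂ} {f : ι → G} (hf : ∀ k l, f k = f l → A k l = 0) (x : ι → ℂ) :
    ∑ ψ : AddChar G ℂ, star ((ψ ∘ f) * x) ⬝ᵥ A *ᵥ ((ψ ∘ f) * x) = 0 := by
  simp_rw [star_mul_dotProduct_mulVec_mul_eq_sum]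
  rw [Finset.sum_comm]
  refine Finset.sum_eq_zero fun k _ => ?_
  rw [Finset.sum_comm]
  refine Finset.sum_eq_zero fun l _ => ?_
  rw [← Finset.sum_mul]
  by_cases hkl : f k = f l
  · simp [hf k l hkl]
  · have : ∑ ψ : AddChar G ℂ, star (ψ (f k)) * ψ (f l) = 0 := by
      simp_rw [Complex.star_def, ← AddChar.map_neg_eq_conj, ← AddChar.map_add_eq_mul]
      exact AddChar.sum_apply_eq_zero_iff_ne_zero.2 (by rwa [neg_add_eq_sub, sub_ne_zero, ne_comm])
    simp only [Function.comp_apply, this, zero_mul]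

theorem re_dotProduct_mulVec_le_of_colorable [DecidableEq ι] {G : Type*} [AddCommGroup G]
    [Fintype G] {A : Matrix ι ι ℂ} {f : ι → G} (hf : ∀ k l, f k = f l → A k l = 0)
    (d : ι → ℂ) {μ : ℝ}
    (hμ : ∀ v, (star v ⬝ᵥ (diagonal d - A) *ᵥ v).re ≤ μ * (star v ⬝ᵥ v).re) (x : ι → ℂ) :
    (star x ⬝ᵥ A *ᵥ x).re ≤
      (Fintype.card G - 1) * (μ * (star x ⬝ᵥ x).re - (star x ⬝ᵥ diagonal d *ᵥ x).re) := by
  set m := (star x ⬝ᵥ diagonal d *ᵥ x).re - μ * (star x ⬝ᵥ x).re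
  set a : AddChar G ℂ → ℝ := fun ψ => (star ((ψ ∘ f) * x) ⬝ᵥ A *ᵥ ((ψ ∘ f) * x)).re
  have hunit (ψ : AddChar G ℂ) (k : ι) : star ((ψ ∘ f) k) * (ψ ∘ f) k = 1 := by
    simp [← AddChar.map_neg_eq_conj, ← AddChar.map_add_eq_mul]
  have hsum : ∑ ψ, a ψ = 0 := by
    rw [← Complex.re_sum, sum_addChar_star_mul_dotProduct_mulVec_mul_eq_zero hf, Complex.zero_re]
  have hlower (ψ : AddChar G ℂ) : m ≤ a ψ := by
    have := hμ ((ψ ∘ f) * x)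
    rw [sub_mulVec, dotProduct_sub, Complex.sub_re,
      star_mul_dotProduct_diagonal_mulVec_mul_of_unit d (hunit ψ),
      star_mul_dotProduct_mul_of_unit (hunit ψ)] at this
    linarith
  have ha0 : a 0 = (star x ⬝ᵥ A *ᵥ x).re := by simp [a]
  have := Finset.single_le_sum (fun ψ _ => sub_nonneg.2 (hlower ψ)) (Finset.mem_univ 0)
  rw [Finset.sum_sub_distrib, hsum, Finset.sum_const, Finset.card_univ, AddChar.card_eq,
    nsmul_eq_mul, ha0] at this
  linarith

end PhaseTwist

theorem le_apply_zero_of_antitone {α : Type*} [Preorder α] {n : ℕ} (hn : 0 < n)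
    {ρ g : Fin n → α} (hρ : Antitone ρ) (h : ∃ e : Equiv.Perm (Fin n), ρ = g ∘ e) (i : Fin n) :
    g i ≤ ρ ⟨0, hn⟩ := by
  obtain ⟨e, rfl⟩ := h
  simpa using hρ (show (⟨0, hn⟩ : Fin n) ≤ e.symm i from Nat.zero_le _)

theorem stmt_2_general {n : ℕ} (hn : 0 < n) (c : ℕ) (hc : 2 ≤ c)
    (A B : Matrix (Fin n) (Fin n) ℂ) (hA : A.IsHermitian)
    (f : Fin n → Fin c) (hf : ∀ k l : Fin n, f k = f l → A k l = 0)
    (b : Fin n → ℝ) (hB : B = Matrix.diagonal fun i => (b i : ℂ))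
    (hBmA : (B - A).IsHermitian) (hBpA : (B + A).IsHermitian)
    (μ ν α : Fin n → ℝ)
    (hμa : Antitone μ) (hμ : ∃ e : Equiv.Perm (Fin n), μ = hBmA.eigenvalues ∘ e)
    (hν : ∃ e : Equiv.Perm (Fin n), ν = hBpA.eigenvalues ∘ e)
    (hαa : Antitone α) (hα : ∃ e : Equiv.Perm (Fin n), α = hA.eigenvalues ∘ e) :
    α ⟨0, hn⟩ ≤ ((c : ℝ) - 1) * (α ⟨0, hn⟩ - ν ⟨0, hn⟩ + μ ⟨0, hn⟩) ∧
    (0 < α ⟨0, hn⟩ - ν ⟨0, hn⟩ + μ ⟨0, hn⟩ →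
      (c : ℝ) ≥ 1 + α ⟨0, hn⟩ / (α ⟨0, hn⟩ - ν ⟨0, hn⟩ + μ ⟨0, hn⟩)) := by
  set i0 : Fin n := ⟨0, hn⟩
  have : NeZero c := ⟨by omega⟩
  obtain ⟨j, hνj⟩ := hν
  set x := ⇑(hBpA.eigenvectorBasis (j i0))
  have hx : star x ⬝ᵥ x = 1 := hBpA.star_eigenvectorBasis_dotProduct_self _
  have hν0 : ν i0 = (star x ⬝ᵥ (B + A) *ᵥ x).re := by
    rw [hνj, Function.comp_apply, hBpA.star_eigenvectorBasis_dotProduct_mulVec]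
    rfl
  have hAx : (star x ⬝ᵥ A *ᵥ x).re ≤ α i0 := by
    simpa [hx] using hA.re_dotProduct_mulVec_le (le_apply_zero_of_antitone hn hαa hα) x
  have hcol := re_dotProduct_mulVec_le_of_colorable hf (fun i => (b i : ℂ)) (μ := μ i0)
    (by simpa [← hB] using hBmA.re_dotProduct_mulVec_le (le_apply_zero_of_antitone hn hμa hμ)) x
  rw [Fintype.card_fin, hx, Complex.one_re, mul_one, ← hB] at hcol
  rw [add_mulVec, dotProduct_add, Complex.add_re] at hν0
  have hc' : (2 : ℝ) ≤ c := by exact_mod_cast hc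
  have hbound : α i0 ≤ (c - 1) * (α i0 - ν i0 + μ i0) := by
    nlinarith [mul_nonneg (sub_nonneg.2 hc') (sub_nonneg.2 hAx)]
  refine ⟨hbound, fun hpos => ?_⟩
  rw [ge_iff_le, ← le_sub_iff_add_le', div_le_iff₀ hpos]
  exact hbound

/-- If the Hermitian matrix `A` is colorable with `c ≥ 2` colors and `B` is a real diagonal
matrix, then `λ_max A ≤ (c-1)·(λ_max A - λ_max (B+A) + λ_max (B-A))`; in particular, if
`λ_max A - λ_max (B+A) + λ_max (B-A) > 0` then
`c ≥ 1 + λ_max A / (λ_max A - λ_max (B+A) + λ_max (B-A))`.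
Here `μ`, `ν`, `α` are the non-increasing enumerations of the eigenvalues of
`B - A`, `B + A` and `A` respectively, so the maximum eigenvalue is the value at index `0`. -/
theorem stmt_2 {n : ℕ} (hn : 0 < n) (c : ℕ) (hc : 2 ≤ c)
    (A B : Matrix (Fin n) (Fin n) ℂ) (hA : A.IsHermitian)
    (f : Fin n → Fin c) (hf : ∀ k l : Fin n, f k = f l → A k l = 0)
    (b : Fin n → ℝ) (hB : B = Matrix.diagonal fun i => (b i : ℂ))
    (hBmA : (B - A).IsHermitian) (hBpA : (B + A).IsHermitian)
    (μ ν α : Fin n → ℝ)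
    (hμa : Antitone μ) (hμ : ∃ e : Equiv.Perm (Fin n), μ = hBmA.eigenvalues ∘ e)
    (hνa : Antitone ν) (hν : ∃ e : Equiv.Perm (Fin n), ν = hBpA.eigenvalues ∘ e)
    (hαa : Antitone α) (hα : ∃ e : Equiv.Perm (Fin n), α = hA.eigenvalues ∘ e) :
    α ⟨0, hn⟩ ≤ ((c : ℝ) - 1) * (α ⟨0, hn⟩ - ν ⟨0, hn⟩ + μ ⟨0, hn⟩) ∧
    (0 < α ⟨0, hn⟩ - ν ⟨0, hn⟩ + μ ⟨0, hn⟩ →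
      (c : ℝ) ≥ 1 + α ⟨0, hn⟩ / (α ⟨0, hn⟩ - ν ⟨0, hn⟩ + μ ⟨0, hn⟩)) :=
  stmt_2_general hn c hc A B hA f hf b hB hBmA hBpA μ ν α hμa hμ hν hαa hα
end

section
/- Let c ≥ 2 be an integer, let A ∈ ℂ^{n×n} be a Hermitian matrix that is colorable with c colors, and let B ∈ ℂ^{n×n} be an arbitrary real diagonal matrix. Then for every m with 1 ≤ m ≤ n: Σ_{i=1}^m λ_i↓(B − A) ≥ Σ_{i=1}^m λ_i↓(B + (1/(c−1))·A) ≥ Σ_{i=1}^m λ_i↓(B + A) − ((c−2)/(c−1))·Σ_{i=1}^m λ_i↓(A). -/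
/-!
Write `S_m(X)` for the sum of the `m` largest eigenvalues of a Hermitian matrix `X`. By Ky Fan's
maximum principle, `S_m(X)` is the largest value of `∑ i, re ⟪v i, X v i⟫` over orthonormal
families `v` of length `m`; hence `S_m` is subadditive and invariant under unitary conjugation.

Let `ζ` be a primitive `c`-th root of unity and `D` the diagonal unitary with entries `ζ ^ f k`.
The `(k, l)` entry of `star (D ^ j) * A * D ^ j` is `(conj ζ ^ f k * ζ ^ f l) ^ j * A k l`, so
summing over `j < c` kills every entry with `f k ≠ f l`, and the others vanish by colorability:
`∑ j < c, star (D ^ j) * A * D ^ j = 0`. As `D` commutes with `B`, this gives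
`(c - 1) • (B + (c - 1)⁻¹ • A) = ∑ 1 ≤ j < c, star (D ^ j) * (B - A) * D ^ j`, and the first
inequality follows. The second is subadditivity applied to
`B + A = (B + (c - 1)⁻¹ • A) + ((c - 2) / (c - 1)) • A`.
-/

open Finset RCLike Matrix
open scoped InnerProductSpace

theorem sum_mul_le_sum_of_forall_le {ι : Type*} [Fintype ι] (s : Finset ι) {lam w : ι → ℝ}
    (hs : ∀ j ∈ s, ∀ k ∉ s, lam k ≤ lam j) (hw₀ : ∀ j, 0 ≤ w j) (hw₁ : ∀ j, w j ≤ 1)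
    (hw : ∑ j, w j = #s) :
    ∑ j, lam j * w j ≤ ∑ j ∈ s, lam j := by
  classical
  rcases s.eq_empty_or_nonempty with rfl | hne
  · have : ∀ j, w j = 0 := by
      simpa [Finset.sum_eq_zero_iff_of_nonneg (fun j _ => hw₀ j)] using hw
    simp [this]
  -- `θ` separates the values of `lam` on `s` from those off `s`
  set θ := s.inf' hne lam
  have key : ∑ j, lam j * w j - ∑ j ∈ s, lam j
      = ∑ j, (lam j - θ) * (w j - if j ∈ s then 1 else 0) := by
    simp only [mul_sub, sub_mul, sum_sub_distrib, ← mul_sum, mul_ite, mul_one, mul_zero,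
      sum_ite_mem, univ_inter, hw, sum_const, nsmul_eq_mul]
    ring
  have : ∑ j, (lam j - θ) * (w j - if j ∈ s then 1 else 0) ≤ 0 := by
    refine sum_nonpos fun j _ => ?_
    by_cases hj : j ∈ s
    · simp only [hj, if_true]
      exact mul_nonpos_of_nonneg_of_nonpos (sub_nonneg.2 (inf'_le _ hj)) (by linarith [hw₁ j])
    · simp only [hj, if_false, sub_zero]
      exact mul_nonpos_of_nonpos_of_nonneg
        (sub_nonpos.2 (le_inf' _ _ fun i hi => hs i hi j hj)) (hw₀ j)
  linarith

section InnerProductSpace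

variable {𝕜 E ι κ : Type*} [RCLike 𝕜] [NormedAddCommGroup E] [InnerProductSpace 𝕜 E]
  [Fintype ι] [Fintype κ] {T : E →ₗ[𝕜] E} {u : OrthonormalBasis ι 𝕜 E} {lam : ι → ℝ}

theorem re_inner_map_self_eq_sum (hu : ∀ j, T (u j) = (lam j : 𝕜) • u j) (x : E) :
    re ⟪x, T x⟫_𝕜 = ∑ j, lam j * ‖⟪u j, x⟫_𝕜‖ ^ 2 := by
  have : T x = ∑ j, (lam j * ⟪u j, x⟫_𝕜) • u j := by
    conv_lhs => rw [← u.sum_repr' x]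
    simp only [map_sum, map_smul, hu, smul_smul, mul_comm]
  simp only [this, inner_sum, inner_smul_right, map_sum, ← inner_conj_symm x (u _), mul_assoc,
    RCLike.mul_conj, re_ofReal_mul]
  norm_cast

theorem sum_re_inner_le_sum (hu : ∀ j, T (u j) = (lam j : 𝕜) • u j) {v : κ → E}
    (hv : Orthonormal 𝕜 v) (s : Finset ι) (hs : ∀ j ∈ s, ∀ k ∉ s, lam k ≤ lam j)
    (hcard : #s = Fintype.card κ) :
    ∑ i, re ⟪v i, T (v i)⟫_𝕜 ≤ ∑ j ∈ s, lam j := by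
  simp only [re_inner_map_self_eq_sum hu]
  rw [sum_comm]
  simp only [← mul_sum]
  refine sum_mul_le_sum_of_forall_le s hs (fun j => sum_nonneg fun i _ => by positivity)
    (fun j => ?_) ?_
  · calc ∑ i, ‖⟪u j, v i⟫_𝕜‖ ^ 2 = ∑ i, ‖⟪v i, u j⟫_𝕜‖ ^ 2 := by
          simp only [← inner_conj_symm (v _), RCLike.norm_conj]
      _ ≤ ‖u j‖ ^ 2 := hv.sum_inner_products_le (u j)
      _ = 1 := by simp [u.orthonormal.1 j]
  · rw [sum_comm]
    simp [u.sum_sq_norm_inner_right, hv.1, hcard]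

end InnerProductSpace

theorem Fin.filter_val_lt_eq_map_castLEEmb {m n : ℕ} (hmn : m ≤ n) :
    univ.filter (fun i : Fin n => (i : ℕ) < m) = univ.map (Fin.castLEEmb hmn) := by
  ext i
  simp only [mem_filter, mem_univ, true_and, mem_map, Fin.castLEEmb_apply]
  exact ⟨fun hi => ⟨⟨i, hi⟩, rfl⟩, by rintro ⟨a, rfl⟩; exact a.2⟩

namespace Matrix

variable {𝕜 ι κ : Type*} [RCLike 𝕜] [Fintype ι] [DecidableEq ι]

def compressionTrace [Fintype κ] (v : κ → EuclideanSpace 𝕜 ι) : Matrix ι ι 𝕜 →ₗ[ℝ] ℝ where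
  toFun X := ∑ i, re ⟪v i, toEuclideanLin X (v i)⟫_𝕜
  map_add' X Y := by simp [inner_add_right, sum_add_distrib]
  map_smul' r X := by
    simp only [RingHom.id_apply, smul_eq_mul, mul_sum, RCLike.real_smul_eq_coe_smul (K := 𝕜) r X,
      map_smul, LinearMap.smul_apply, inner_smul_right, re_ofReal_mul]

theorem compressionTrace_star_mul_mul [Fintype κ] (v : κ → EuclideanSpace 𝕜 ι)
    (U X : Matrix ι ι 𝕜) :
    compressionTrace v (star U * X * U) = compressionTrace (fun i => toEuclideanLin U (v i)) X := by
  simp only [compressionTrace, LinearMap.coe_mk, AddHom.coe_mk]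
  simp only [toLpLin_mul_same, star_eq_conjTranspose, LinearMap.comp_apply,
    toEuclideanLin_conjTranspose_eq_adjoint, LinearMap.adjoint_inner_right]

theorem _root_.Orthonormal.toEuclideanLin_of_mem_unitaryGroup {U : Matrix ι ι 𝕜}
    (hU : U ∈ unitaryGroup ι 𝕜) {v : κ → EuclideanSpace 𝕜 ι} (hv : Orthonormal 𝕜 v) :
    Orthonormal 𝕜 (fun i => toEuclideanLin U (v i)) := by
  classical
  rw [orthonormal_iff_ite] at hv ⊢
  intro i j
  rw [← hv i j, ← LinearMap.adjoint_inner_right, ← toEuclideanLin_conjTranspose_eq_adjoint,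
    ← LinearMap.comp_apply, ← toLpLin_mul_same, ← star_eq_conjTranspose, mem_unitaryGroup_iff'.1 hU]
  simp

end Matrix

namespace Matrix.IsHermitian

variable {𝕜 : Type*} [RCLike 𝕜] {n m : ℕ} {X : Matrix (Fin n) (Fin n) 𝕜} (hX : X.IsHermitian)
include hX

theorem toEuclideanLin_eigenvectorBasis (j : Fin n) :
    toEuclideanLin X (hX.eigenvectorBasis j) = (hX.eigenvalues j : 𝕜) • hX.eigenvectorBasis j := by
  rw [toLpLin_apply, hX.mulVec_eigenvectorBasis, RCLike.real_smul_eq_coe_smul (K := 𝕜)]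
  rfl

theorem compressionTrace_le {lam : Fin n → ℝ} (hlam : Antitone lam) {e : Equiv.Perm (Fin n)}
    (he : lam = hX.eigenvalues ∘ e) (hmn : m ≤ n) {v : Fin m → EuclideanSpace 𝕜 (Fin n)}
    (hv : Orthonormal 𝕜 v) :
    compressionTrace v X ≤ ∑ i ∈ univ.filter (fun i : Fin n => (i : ℕ) < m), lam i := by
  set s := univ.filter (fun i : Fin n => (i : ℕ) < m)
  have hs : s = univ.map (Fin.castLEEmb hmn) := Fin.filter_val_lt_eq_map_castLEEmb hmn
  calc compressionTrace v X ≤ ∑ j ∈ s.map e.toEmbedding, hX.eigenvalues j := by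
        refine sum_re_inner_le_sum hX.toEuclideanLin_eigenvectorBasis hv _ ?_ (by simp [hs])
        intro j hj k hk
        simp only [mem_map_equiv, s, mem_filter, mem_univ, true_and, not_lt] at hj hk
        simpa [he] using hlam (Fin.le_def.2 (hj.trans_le hk).le)
    _ = ∑ i ∈ s, lam i := by simp [he]

theorem exists_orthonormal_compressionTrace_eq {lam : Fin n → ℝ} {e : Equiv.Perm (Fin n)}
    (he : lam = hX.eigenvalues ∘ e) (hmn : m ≤ n) :
    ∃ v : Fin m → EuclideanSpace 𝕜 (Fin n), Orthonormal 𝕜 v ∧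
      compressionTrace v X = ∑ i ∈ univ.filter (fun i : Fin n => (i : ℕ) < m), lam i := by
  refine ⟨fun i => hX.eigenvectorBasis (e (Fin.castLE hmn i)),
    hX.eigenvectorBasis.orthonormal.comp _ (e.injective.comp (Fin.castLE_injective hmn)), ?_⟩
  simp [compressionTrace, Fin.filter_val_lt_eq_map_castLEEmb hmn,
    hX.toEuclideanLin_eigenvectorBasis, inner_smul_right_eq_smul, RCLike.smul_re, he]

theorem sum_filter_le_of_smul_eq_sum_star_mul_mul {lamX lamY : Fin n → ℝ}
    {eX eY : Equiv.Perm (Fin n)} (heX : lamX = hX.eigenvalues ∘ eX)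
    {Y : Matrix (Fin n) (Fin n) 𝕜} (hY : Y.IsHermitian) (hlamY : Antitone lamY)
    (heY : lamY = hY.eigenvalues ∘ eY) (hmn : m ≤ n) {α : Type*} {s : Finset α} (hs : s.Nonempty) {U : α → Matrix (Fin n) (Fin n) 𝕜}
    (hU : ∀ j ∈ s, U j ∈ unitaryGroup (Fin n) 𝕜)
    (hXY : (#s : ℝ) • X = ∑ j ∈ s, star (U j) * Y * U j) :
    ∑ i ∈ univ.filter (fun i : Fin n => (i : ℕ) < m), lamX i ≤
      ∑ i ∈ univ.filter (fun i : Fin n => (i : ℕ) < m), lamY i := by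
  obtain ⟨v, hv, hXv⟩ := hX.exists_orthonormal_compressionTrace_eq heX hmn
  refine le_of_mul_le_mul_left ?_ (Nat.cast_pos.2 hs.card_pos : (0 : ℝ) < #s)
  calc (#s : ℝ) * ∑ i ∈ univ.filter (fun i : Fin n => (i : ℕ) < m), lamX i
      = ∑ j ∈ s, compressionTrace (fun i => toEuclideanLin (U j) (v i)) Y := by
        rw [← hXv, ← smul_eq_mul, ← map_smul, hXY, map_sum]
        simp only [compressionTrace_star_mul_mul]
    _ ≤ ∑ _j ∈ s, ∑ i ∈ univ.filter (fun i : Fin n => (i : ℕ) < m), lamY i :=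
        sum_le_sum fun j hj => hY.compressionTrace_le hlamY heY hmn
          (hv.toEuclideanLin_of_mem_unitaryGroup (hU j hj))
    _ = _ := by rw [sum_const, nsmul_eq_mul]

theorem sum_filter_le_add_smul {lamX lamY lamZ : Fin n → ℝ} {eX eY eZ : Equiv.Perm (Fin n)}
    (heX : lamX = hX.eigenvalues ∘ eX) {Y Z : Matrix (Fin n) (Fin n) 𝕜} (hY : Y.IsHermitian)
    (hZ : Z.IsHermitian) (hlamY : Antitone lamY) (heY : lamY = hY.eigenvalues ∘ eY)
    (hlamZ : Antitone lamZ) (heZ : lamZ = hZ.eigenvalues ∘ eZ) (hmn : m ≤ n) {r : ℝ} (hr : 0 ≤ r)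
    (hXYZ : X = Y + r • Z) :
    ∑ i ∈ univ.filter (fun i : Fin n => (i : ℕ) < m), lamX i ≤
      ∑ i ∈ univ.filter (fun i : Fin n => (i : ℕ) < m), lamY i +
        r * ∑ i ∈ univ.filter (fun i : Fin n => (i : ℕ) < m), lamZ i := by
  obtain ⟨v, hv, hXv⟩ := hX.exists_orthonormal_compressionTrace_eq heX hmn
  rw [← hXv, hXYZ, map_add, map_smul, smul_eq_mul]
  gcongr
  · exact hY.compressionTrace_le hlamY heY hmn hv
  · exact hZ.compressionTrace_le hlamZ heZ hmn hv

end Matrix.IsHermitian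

section Coloring

variable {ι : Type*} [Fintype ι] [DecidableEq ι] {c : ℕ} {ζ : ℂ}

def colorPhase (ζ : ℂ) (f : ι → Fin c) : Matrix ι ι ℂ := diagonal fun k => ζ ^ (f k : ℕ)

theorem star_pow_mul_pow_of_norm_eq_one (hζ : ‖ζ‖ = 1) (i : ℕ) : star (ζ ^ i) * ζ ^ i = 1 := by
  rw [Complex.star_def, RCLike.conj_mul, norm_pow, hζ]
  simp

theorem colorPhase_mem_unitaryGroup (hζ : ‖ζ‖ = 1) (f : ι → Fin c) :
    colorPhase ζ f ∈ unitaryGroup ι ℂ := by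
  rw [mem_unitaryGroup_iff', colorPhase, star_eq_conjTranspose, diagonal_conjTranspose,
    diagonal_mul_diagonal, ← diagonal_one]
  exact congrArg diagonal (funext fun k => star_pow_mul_pow_of_norm_eq_one hζ _)

theorem sum_star_colorPhase_pow_mul_mul_pow (hζ : IsPrimitiveRoot ζ c) {f : ι → Fin c}
    {A : Matrix ι ι ℂ} (hA : ∀ k l, f k = f l → A k l = 0) :
    ∑ j ∈ range c, star (colorPhase ζ f ^ j) * A * colorPhase ζ f ^ j = 0 := by
  ext k l
  have hc : c ≠ 0 := by rintro rfl; exact (f k).elim0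
  set a := star (ζ ^ (f k : ℕ)) * ζ ^ (f l : ℕ)
  have hentry : ∀ j, (star (colorPhase ζ f ^ j) * A * colorPhase ζ f ^ j) k l = a ^ j * A k l := by
    intro j
    simp only [colorPhase, diagonal_pow, star_eq_conjTranspose, diagonal_conjTranspose,
      diagonal_mul, mul_diagonal, Pi.star_apply, Pi.pow_apply, a, mul_pow, star_pow]
    ring
  simp only [Matrix.sum_apply, hentry, ← sum_mul, Matrix.zero_apply]
  rcases eq_or_ne (f k) (f l) with hkl | hkl
  · simp [hA k l hkl]
  -- `a` is a `c`-th root of unity different from `1`, so its geometric sum vanishes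
  have ha : a ^ c = 1 := by
    rw [mul_pow, ← star_pow, ← pow_mul, ← pow_mul, mul_comm _ c, mul_comm _ c, pow_mul, pow_mul,
      hζ.pow_eq_one, one_pow, one_pow, star_one, one_mul]
  have ha' : a ≠ 1 := by
    intro h
    have : ζ ^ (f l : ℕ) = ζ ^ (f k : ℕ) :=
      calc ζ ^ (f l : ℕ) = star (ζ ^ (f k : ℕ)) * ζ ^ (f k : ℕ) * ζ ^ (f l : ℕ) := by
            rw [star_pow_mul_pow_of_norm_eq_one (hζ.norm'_eq_one hc), one_mul]
        _ = ζ ^ (f k : ℕ) * a := by ring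
        _ = ζ ^ (f k : ℕ) := by rw [h, mul_one]
    exact hkl (Fin.ext (hζ.pow_inj (f k).2 (f l).2 this.symm))
  rw [geom_sum_eq ha' c, ha, sub_self, zero_div, zero_mul]

theorem smul_add_inv_smul_eq_sum_star_colorPhase_pow (hζ : IsPrimitiveRoot ζ c) (hc : 2 ≤ c)
    {f : ι → Fin c} {A : Matrix ι ι ℂ} (hA : ∀ k l, f k = f l → A k l = 0) (d : ι → ℂ) :
    ((c - 1 : ℕ) : ℝ) • (diagonal d + ((c : ℂ) - 1)⁻¹ • A) =
      ∑ j ∈ range (c - 1),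
        star (colorPhase ζ f ^ (j + 1)) * (diagonal d - A) * colorPhase ζ f ^ (j + 1) := by
  set D := colorPhase ζ f
  have hA' : ∑ j ∈ range (c - 1), star (D ^ (j + 1)) * A * D ^ (j + 1) = -A := by
    have h := sum_range_succ' (fun j => star (D ^ j) * A * D ^ j) (c - 1)
    rw [Nat.sub_add_cancel (by omega), sum_star_colorPhase_pow_mul_mul_pow hζ hA] at h
    simpa [eq_neg_iff_add_eq_zero] using h.symm
  have hB : ∀ j, star (D ^ j) * diagonal d * D ^ j = diagonal d := by
    intro j
    have hDd : Commute D (diagonal d) := commute_diagonal _ _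
    have hU := pow_mem (colorPhase_mem_unitaryGroup (hζ.norm'_eq_one (by omega)) f) j
    rw [mul_assoc, ← (hDd.pow_left j).eq, ← mul_assoc, mem_unitaryGroup_iff'.1 hU, one_mul]
  have hc1 : ((c - 1 : ℕ) : ℂ) = (c : ℂ) - 1 := by push_cast [Nat.cast_sub (by omega : 1 ≤ c)]; ring
  have hc1' : (c : ℂ) - 1 ≠ 0 := by rw [← hc1]; exact_mod_cast (by omega : c - 1 ≠ 0)
  simp only [mul_sub, sub_mul, sum_sub_distrib, hB, hA', sum_const, card_range, sub_neg_eq_add,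
    smul_add, Nat.cast_smul_eq_nsmul, ← Nat.cast_smul_eq_nsmul ℂ, smul_smul, hc1,
    mul_inv_cancel₀ hc1', one_smul]

end Coloring

theorem stmt_7_general {n : ℕ} (c : ℕ) (hc : 2 ≤ c)
    (A B : Matrix (Fin n) (Fin n) ℂ) (hA : A.IsHermitian)
    (f : Fin n → Fin c) (hf : ∀ k l : Fin n, f k = f l → A k l = 0)
    (b : Fin n → ℝ) (hB : B = Matrix.diagonal fun i => (b i : ℂ))
    (hBmA : (B - A).IsHermitian)
    (hBcA : (B + ((c : ℂ) - 1)⁻¹ • A).IsHermitian)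
    (hBpA : (B + A).IsHermitian)
    (μ κ ν α : Fin n → ℝ)
    (hμa : Antitone μ) (hμ : ∃ e : Equiv.Perm (Fin n), μ = hBmA.eigenvalues ∘ e)
    (hκa : Antitone κ) (hκ : ∃ e : Equiv.Perm (Fin n), κ = hBcA.eigenvalues ∘ e)
    (hν : ∃ e : Equiv.Perm (Fin n), ν = hBpA.eigenvalues ∘ e)
    (hαa : Antitone α) (hα : ∃ e : Equiv.Perm (Fin n), α = hA.eigenvalues ∘ e)
    (m : ℕ) (hmn : m ≤ n) :
    (∑ i ∈ Finset.univ.filter (fun i : Fin n => (i : ℕ) < m), μ i) ≥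
      (∑ i ∈ Finset.univ.filter (fun i : Fin n => (i : ℕ) < m), κ i) ∧
    (∑ i ∈ Finset.univ.filter (fun i : Fin n => (i : ℕ) < m), κ i) ≥
      (∑ i ∈ Finset.univ.filter (fun i : Fin n => (i : ℕ) < m), ν i) -
        (((c : ℝ) - 2) / ((c : ℝ) - 1)) *
          (∑ i ∈ Finset.univ.filter (fun i : Fin n => (i : ℕ) < m), α i) := by
  obtain ⟨eμ, heμ⟩ := hμ
  obtain ⟨eκ, heκ⟩ := hκ
  obtain ⟨eν, heν⟩ := hν
  obtain ⟨eα, heα⟩ := hα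
  subst hB
  have hζ := Complex.isPrimitiveRoot_exp c (by omega)
  have hc2 : (2 : ℝ) ≤ c := by exact_mod_cast hc
  constructor
  · refine hBcA.sum_filter_le_of_smul_eq_sum_star_mul_mul heκ hBmA hμa heμ hmn
      (s := range (c - 1)) (U := fun j => colorPhase _ f ^ (j + 1)) (by simp; omega)
      (fun j _ => pow_mem (colorPhase_mem_unitaryGroup (hζ.norm'_eq_one (by omega)) f) _) ?_
    rw [card_range]
    exact smul_add_inv_smul_eq_sum_star_colorPhase_pow hζ hc hf _
  · have hr : (0 : ℝ) ≤ ((c : ℝ) - 2) / ((c : ℝ) - 1) := div_nonneg (by linarith) (by linarith)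
    have hsplit : ((c : ℂ) - 1)⁻¹ + ((((c : ℝ) - 2) / ((c : ℝ) - 1) : ℝ) : ℂ) = 1 := by
      have : (c : ℂ) - 1 ≠ 0 := by exact_mod_cast (by linarith : (c : ℝ) - 1 ≠ 0)
      push_cast
      field_simp
      ring
    have := hBpA.sum_filter_le_add_smul heν hBcA hA hκa heκ hαa heα hmn hr
      (by rw [add_assoc, ← Complex.coe_smul, ← add_smul, hsplit, one_smul])
    linarith

/-- **Majorization generalization of Nikiforov's theorem.** If the Hermitian matrix `A` is
colorable with `c ≥ 2` colors and `B` is a real diagonal matrix, then for every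
`1 ≤ m ≤ n` the sum of the `m` largest eigenvalues satisfies
`Σ_{i<m} λ_i↓(B-A) ≥ Σ_{i<m} λ_i↓(B + (1/(c-1))•A)
  ≥ Σ_{i<m} λ_i↓(B+A) - ((c-2)/(c-1))·Σ_{i<m} λ_i↓(A)`.
Here `μ`, `κ`, `ν`, `α` are the non-increasing enumerations of the eigenvalues of
`B - A`, `B + (1/(c-1))•A`, `B + A` and `A` respectively. -/
theorem stmt_7 {n : ℕ} (c : ℕ) (hc : 2 ≤ c)
    (A B : Matrix (Fin n) (Fin n) ℂ) (hA : A.IsHermitian)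
    (f : Fin n → Fin c) (hf : ∀ k l : Fin n, f k = f l → A k l = 0)
    (b : Fin n → ℝ) (hB : B = Matrix.diagonal fun i => (b i : ℂ))
    (hBmA : (B - A).IsHermitian)
    (hBcA : (B + ((c : ℂ) - 1)⁻¹ • A).IsHermitian)
    (hBpA : (B + A).IsHermitian)
    (μ κ ν α : Fin n → ℝ)
    (hμa : Antitone μ) (hμ : ∃ e : Equiv.Perm (Fin n), μ = hBmA.eigenvalues ∘ e)
    (hκa : Antitone κ) (hκ : ∃ e : Equiv.Perm (Fin n), κ = hBcA.eigenvalues ∘ e)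
    (hνa : Antitone ν) (hν : ∃ e : Equiv.Perm (Fin n), ν = hBpA.eigenvalues ∘ e)
    (hαa : Antitone α) (hα : ∃ e : Equiv.Perm (Fin n), α = hA.eigenvalues ∘ e)
    (m : ℕ) (hm1 : 1 ≤ m) (hmn : m ≤ n) :
    (∑ i ∈ Finset.univ.filter (fun i : Fin n => (i : ℕ) < m), μ i) ≥
      (∑ i ∈ Finset.univ.filter (fun i : Fin n => (i : ℕ) < m), κ i) ∧
    (∑ i ∈ Finset.univ.filter (fun i : Fin n => (i : ℕ) < m), κ i) ≥
      (∑ i ∈ Finset.univ.filter (fun i : Fin n => (i : ℕ) < m), ν i) -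
        (((c : ℝ) - 2) / ((c : ℝ) - 1)) *
          (∑ i ∈ Finset.univ.filter (fun i : Fin n => (i : ℕ) < m), α i) :=
  stmt_7_general c hc A B hA f hf b hB hBmA hBcA hBpA μ κ ν α hμa hμ hκa hκ hν hαa hα m hmn
end
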